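/- Let 𝔪 be a nonempty symmetric multisegment in the bad-parity setting, with e_max the largest end of a segment of 𝔪, and let η₁ = [e(Δ_l), e(Δ₁)] be the segment of 𝔪₁ ending at e_max. Then η₁ is the longest among the segments of AD(𝔪) ending at e_max: every segment Δ of AD(𝔪) with e(Δ) = e_max satisfies ℓ(Δ) ≤ ℓ(η₁). -/

import Mathlib

namespace AZ

/-- A segment in doubled coordinates: the pair `(a, b)` represents the segment
`[a/2, b/2]` whose endpoints lie in `(1/2)ℤ`.  Thus the end `e(Δ)` is `Δ.2 / 2`,
the beginning `b(Δ)` is `Δ.1 / 2`, and `Δ` is centered iff `Δ.1 + Δ.2 = 0`. -/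
abbrev Seg := ℤ × ℤ

namespace Seg

/-- Well-formedness of a segment: `a ≤ b` and `a ≡ b [ZMOD 2]`, i.e. `b - a ∈ 2ℕ`. -/
def WF (Δ : Seg) : Prop := Δ.1 ≤ Δ.2 ∧ Δ.1 % 2 = Δ.2 % 2

/-- The dual (contragredient) segment `Δ∨ = [−b, −a]`. -/
def dual (Δ : Seg) : Seg := (-Δ.2, -Δ.1)

/-- `Δ⁻` : the segment with its end removed. -/
def trimEnd (Δ : Seg) : Seg := (Δ.1, Δ.2 - 2)

/-- `⁻Δ` : the segment with its beginning removed. -/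
def trimBeg (Δ : Seg) : Seg := (Δ.1 + 2, Δ.2)

/-- `⁺Δ` : the segment with its beginning extended. -/
def extBeg (Δ : Seg) : Seg := (Δ.1 - 2, Δ.2)

/-- The order on segments: `[x₁,y₁] ≤ [x₂,y₂]` iff `x₁ < x₂`, or `x₁ = x₂` and `y₁ ≥ y₂`. -/
def le (Δ₁ Δ₂ : Seg) : Prop := Δ₁.1 < Δ₂.1 ∨ (Δ₁.1 = Δ₂.1 ∧ Δ₂.2 ≤ Δ₁.2)

end Seg

/-- The condition for `next` to be a successor of `Δ j` in the bad-parity initial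
sequence: `next ∈ m`, `next ≤ Δ j`, `e(next) = e(Δ j) − 1`, and if the dual of `next`
already occurs among `Δ 1, …, Δ j`, then `next` has multiplicity at least `2` in `m`. -/
def SuccBad (m : Multiset Seg) (Δ : ℕ → Seg) (j : ℕ) (next : Seg) : Prop :=
  next ∈ m ∧ Seg.le next (Δ j) ∧ next.2 = (Δ j).2 - 2 ∧
    ((∃ i, 1 ≤ i ∧ i ≤ j ∧ Seg.dual next = Δ i) → 2 ≤ m.count next)

/-- `Δ 1, …, Δ l` is the initial sequence in the bad-parity algorithm for `m`. -/
structure IsInitSeqBad (m : Multiset Seg) (Δ : ℕ → Seg) (l : ℕ) : Prop where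
  one_le : 1 ≤ l
  first_mem : Δ 1 ∈ m
  first_max_end : ∀ Λ ∈ m, Λ.2 ≤ (Δ 1).2
  first_max : ∀ Λ ∈ m, Λ.2 = (Δ 1).2 → Seg.le Λ (Δ 1)
  succ : ∀ j, 1 ≤ j → j < l → SuccBad m Δ j (Δ (j + 1))
  succ_max : ∀ j, 1 ≤ j → j < l → ∀ Λ, SuccBad m Δ j Λ → Seg.le Λ (Δ (j + 1))
  last : ∀ Λ, ¬ SuccBad m Δ l Λ

/-- The multisegment `𝔪₁ = [e(Δ_l), e(Δ₁)] + [−e(Δ₁), −e(Δ_l)]`. -/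
def mOneBad (Δ : ℕ → Seg) (l : ℕ) : Multiset Seg :=
  {((Δ l).2, (Δ 1).2), (-(Δ 1).2, -(Δ l).2)}

/-- The multiset of segments of an initial sequence. -/
def seqM (Δ : ℕ → Seg) (l : ℕ) : Multiset Seg := (Finset.Icc 1 l).val.map Δ

/-- The multisegment `𝔪#` : remove one copy of each `Δ i` and each `Δ i∨`, insert
`Δ i⁻` and `⁻(Δ i∨)` and discard empty segments. -/
def mHashBad (m : Multiset Seg) (Δ : ℕ → Seg) (l : ℕ) : Multiset Seg :=
  (m - (seqM Δ l + (seqM Δ l).map Seg.dual)) +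
    ((seqM Δ l).map Seg.trimEnd +
        (seqM Δ l).map (fun Δ0 => Seg.dual (Seg.trimEnd Δ0))).filter
      fun Δ0 => Δ0.1 ≤ Δ0.2

/-- The bad-parity duality algorithm `AD`, as a relation: `AD(0) = 0` and
`AD(𝔪) = 𝔪₁ + AD(𝔪#)`. -/
inductive IsADBad : Multiset Seg → Multiset Seg → Prop
  | zero : IsADBad 0 0
  | step {m : Multiset Seg} {Δ : ℕ → Seg} {l : ℕ} {d : Multiset Seg}
      (hm : m ≠ 0) (hseq : IsInitSeqBad m Δ l) (hrec : IsADBad (mHashBad m Δ l) d) :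
      IsADBad m (mOneBad Δ l + d)

/-- A valid symmetric multisegment in the bad-parity setting: every centered segment
has even multiplicity. -/
structure BadInput (m : Multiset Seg) : Prop where
  wf : ∀ Δ0 ∈ m, Seg.WF Δ0
  symm : m.map Seg.dual = m
  parity : ∀ Δ₁ ∈ m, ∀ Δ₂ ∈ m, Δ₁.2 % 2 = Δ₂.2 % 2
  evenCentered : ∀ Δ0 : Seg, Δ0.1 + Δ0.2 = 0 → Even (m.count Δ0)

/-- Index `i ∈ {1, …, l}` whose segment's dual also occurs in the initial sequence. -/
def HasDualPair (Δ : ℕ → Seg) (l i : ℕ) : Prop :=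
  1 ≤ i ∧ i ≤ l ∧ ∃ j, 1 ≤ j ∧ j ≤ l ∧ Seg.dual (Δ i) = Δ j

/-- `i₀ = min{i ∈ {1,…,l} : ∃ j ∈ {1,…,l}, Δ i∨ = Δ j}`. -/
def IsMinDual (Δ : ℕ → Seg) (l i₀ : ℕ) : Prop :=
  HasDualPair Δ l i₀ ∧ ∀ i, HasDualPair Δ l i → i₀ ≤ i

/-- `j₀ = max{j ∈ {1,…,l} : ∃ i ∈ {1,…,l}, Δ j∨ = Δ i}`. -/
def IsMaxDual (Δ : ℕ → Seg) (l j₀ : ℕ) : Prop :=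
  HasDualPair Δ l j₀ ∧ ∀ j, HasDualPair Δ l j → j ≤ j₀

/-!
Induct along `AD(𝔪) = 𝔪₁ + AD(𝔪#)`. A segment of `AD(𝔪#)` ends at most at `e(Γ₁)`, where
`Γ₁ ≥ … ≥ Γₙ` is the initial sequence of `𝔪#`, and `e(Γ₁) ≤ e_max`; so if it ends at `e_max`
then `e(Γ₁) = e_max`, and by induction it is no longer than `[e(Γₙ), e(Γ₁)]`. It remains to
show `n ≤ l`. The two sequences then have the same ends, and index by index the beginning of
`Γₜ` exceeds that of `Δₜ` by at most `1`, with equality only if `Δₜ` is dual to a member of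
the sequence `Δ` (`BegInv`, where `1` reads `2` in the doubled coordinates of `Seg`). The
step from `t` to `t + 1` distinguishes whether `Γₜ₊₁` is a leftover segment of `𝔪`, some
`Δⱼ⁻` or some `⁻(Δⱼ∨)`; in each case it exhibits `Δₜ₊₁`, so `Γ` cannot outlast `Δ`.
-/

namespace Seg

@[simp]
lemma dual_dual (v : Seg) : dual (dual v) = v := by
  simp [dual]

lemma dual_involutive : Function.Involutive dual := dual_dual

lemma trimEnd_injective : Function.Injective trimEnd := by
  intro v w h
  simp only [trimEnd, Prod.mk.injEq] at h
  exact Prod.ext h.1 (by omega)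

lemma le_antisymm {v w : Seg} (hvw : le v w) (hwv : le w v) : v = w := by
  rcases hvw with h | ⟨h, h'⟩ <;> rcases hwv with h₂ | ⟨h₂, h₂'⟩ <;>
    exact Prod.ext (by omega) (by omega)

end Seg

lemma count_map_dual (A : Multiset Seg) (v : Seg) :
    (A.map Seg.dual).count v = A.count v.dual := by
  conv_lhs => rw [← Seg.dual_dual v]
  exact Multiset.count_map_eq_count' _ _ Seg.dual_involutive.injective _

lemma mem_seqM {Δ : ℕ → Seg} {l : ℕ} {v : Seg} :
    v ∈ seqM Δ l ↔ ∃ j, 1 ≤ j ∧ j ≤ l ∧ Δ j = v := by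
  simp [seqM, and_assoc]

namespace BadInput

variable {m : Multiset Seg} (hbad : BadInput m)
include hbad

lemma dual_mem {v : Seg} (hv : v ∈ m) : v.dual ∈ m := by
  rw [← hbad.symm]
  exact Multiset.mem_map_of_mem _ hv

lemma count_dual (v : Seg) : m.count v.dual = m.count v := by
  conv_lhs => rw [← hbad.symm]
  rw [count_map_dual, Seg.dual_dual]

end BadInput

namespace IsInitSeqBad

variable {m : Multiset Seg} {Δ : ℕ → Seg} {l : ℕ} (hseq : IsInitSeqBad m Δ l)
include hseq

lemma mem_and_end_eq (j : ℕ) (hj : 1 ≤ j) (hjl : j ≤ l) :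
    Δ j ∈ m ∧ (Δ j).2 = (Δ 1).2 - 2 * ((j : ℤ) - 1) := by
  induction j, hj using Nat.le_induction with
  | base => simpa using hseq.first_mem
  | succ j hj ih =>
    obtain ⟨hmem, -, hend, -⟩ := hseq.succ j hj (by omega)
    refine ⟨hmem, ?_⟩
    rw [hend, (ih (by omega)).2]
    push_cast
    ring

lemma mem (j : ℕ) (hj : 1 ≤ j) (hjl : j ≤ l) : Δ j ∈ m :=
  (hseq.mem_and_end_eq j hj hjl).1

lemma end_eq (j : ℕ) (hj : 1 ≤ j) (hjl : j ≤ l) :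
    (Δ j).2 = (Δ 1).2 - 2 * ((j : ℤ) - 1) :=
  (hseq.mem_and_end_eq j hj hjl).2

lemma eq_of_end_eq {i j : ℕ} (hi : 1 ≤ i) (hil : i ≤ l) (hj : 1 ≤ j) (hjl : j ≤ l)
    (he : (Δ i).2 = (Δ j).2) : i = j := by
  have := hseq.end_eq i hi hil
  have := hseq.end_eq j hj hjl
  omega

lemma nodup_seqM : (seqM Δ l).Nodup := by
  refine Multiset.Nodup.map_on (fun i hi j hj hij => ?_) (Finset.nodup _)
  simp only [Finset.mem_val, Finset.mem_Icc] at hi hj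
  exact hseq.eq_of_end_eq hi.1 hi.2 hj.1 hj.2 (by rw [hij])

lemma lt_and_beg_le_of_succBad {k : ℕ} (hk : 1 ≤ k) (hkl : k ≤ l) {v : Seg}
    (hv : SuccBad m Δ k v) : k < l ∧ v.1 ≤ (Δ (k + 1)).1 := by
  obtain hkl | rfl := lt_or_eq_of_le hkl
  · have hend := hseq.end_eq (k + 1) (by omega) hkl
    have hend' := hseq.end_eq k hk hkl.le
    have := hv.2.2.1
    refine ⟨hkl, ?_⟩
    rcases hseq.succ_max k hk hkl v hv with h | ⟨h, -⟩ <;> omega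
  · exact (hseq.last v hv).elim

section

variable (hbad : BadInput m)
include hbad

lemma neg_end_le_beg {v : Seg} (hv : v ∈ m) : -(Δ 1).2 ≤ v.1 := by
  have := hseq.first_max_end _ (hbad.dual_mem hv)
  simp only [Seg.dual] at this
  omega

lemma beg_emod_two {v : Seg} (hv : v ∈ m) : v.1 % 2 = (Δ 1).2 % 2 := by
  have := (hbad.wf v hv).2
  have := hbad.parity v hv (Δ 1) hseq.first_mem
  omega

lemma beg_succ_le (j : ℕ) (hj : 1 ≤ j) (hjl : j < l) : (Δ (j + 1)).1 ≤ (Δ j).1 - 2 := by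
  obtain ⟨hmem, hle, hend, -⟩ := hseq.succ j hj hjl
  have := hseq.beg_emod_two hbad hmem
  have := hseq.beg_emod_two hbad (hseq.mem j hj hjl.le)
  rcases hle with h | ⟨h, h'⟩ <;> omega

lemma beg_le_sub {i j : ℕ} (hi : 1 ≤ i) (hij : i ≤ j) (hjl : j ≤ l) :
    (Δ j).1 ≤ (Δ i).1 - 2 * ((j : ℤ) - i) := by
  induction j, hij using Nat.le_induction with
  | base => simp
  | succ j hij ih =>
    have := ih (by omega)
    have := hseq.beg_succ_le hbad j (by omega) (by omega)
    push_cast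
    omega

/-- Off the centre this is the multiplicity clause of `SuccBad`; a centered segment has even
multiplicity. -/
lemma two_le_count_of_dual_eq {i j : ℕ} (hi : 1 ≤ i) (hil : i ≤ l) (hj : 1 ≤ j)
    (hjl : j ≤ l) (hd : (Δ i).dual = Δ j) : 2 ≤ m.count (Δ j) := by
  have later :
      ∀ i j, 1 ≤ i → i < j → j ≤ l → (Δ i).dual = Δ j → 2 ≤ m.count (Δ j) := by
    intro i j hi hij hjl hd
    obtain ⟨j, rfl⟩ : ∃ j', j = j' + 1 := ⟨j - 1, by omega⟩
    refine (hseq.succ j (by omega) (by omega)).2.2.2 ⟨i, hi, by omega, ?_⟩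
    rw [← hd, Seg.dual_dual]
  rcases lt_trichotomy i j with hij | rfl | hij
  · exact later i j hi hij hjl hd
  · have hc : (Δ i).1 + (Δ i).2 = 0 := by
      have : -(Δ i).2 = (Δ i).1 := congrArg Prod.fst hd
      omega
    obtain ⟨c, hc⟩ := hbad.evenCentered (Δ i) hc
    have := Multiset.count_pos.mpr (hseq.mem i hi hil)
    omega
  · have hd' : (Δ j).dual = Δ i := by rw [← hd, Seg.dual_dual]
    have := later j i hj hij hil hd'
    rwa [← hd', hbad.count_dual] at this

/-- `Δₖ` and `Δᵣ₊₁ = Δₖ∨` have the same length, so along `Δₖ, …, Δᵣ₊₁` the beginnings drop by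
exactly `2` at each step. -/
lemma dual_eq_succ_of_dual_eq {k r : ℕ} (hk : 1 ≤ k) (hkr : k ≤ r)
    (hrl : r + 1 ≤ l) (hd : (Δ (r + 1)).dual = Δ k) : (Δ r).dual = Δ (k + 1) := by
  have hd₁ : -(Δ (r + 1)).2 = (Δ k).1 := congrArg Prod.fst hd
  have hd₂ : -(Δ (r + 1)).1 = (Δ k).2 := congrArg Prod.snd hd
  have := hseq.end_eq k hk (by omega)
  have := hseq.end_eq r (by omega) (by omega)
  have := hseq.end_eq (k + 1) (by omega) (by omega)
  have := hseq.end_eq (r + 1) (by omega) hrl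
  have := hseq.beg_le_sub hbad (by omega : 1 ≤ k + 1) (by omega : k + 1 ≤ r + 1) hrl
  have := hseq.beg_le_sub hbad hk hkr (by omega)
  have := hseq.beg_succ_le hbad k hk (by omega)
  have := hseq.beg_succ_le hbad r (by omega) (by omega)
  refine Prod.ext ?_ ?_ <;> simp only [Seg.dual] <;> omega

/-- Otherwise `⁻Δₛ`, which is larger than `Δₛ`, would have been chosen after `Δₛ₋₁`. -/
lemma exists_beg_eq_of_trimBeg_mem {s : ℕ} (hs : 1 ≤ s) (hsl : s ≤ l)
    (hmem : (Δ s).trimBeg ∈ m) (hc : -2 < (Δ s).1 + (Δ s).2) :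
    ∃ r, 1 ≤ r ∧ s = r + 1 ∧ (Δ r).1 = (Δ s).1 + 2 := by
  obtain ⟨r, hr, rfl⟩ : ∃ r, 1 ≤ r ∧ s = r + 1 := by
    refine ⟨s - 1, by_contra fun hs1 => ?_, by omega⟩
    obtain rfl : s = 1 := by omega
    have := hseq.first_max _ hmem rfl
    simp only [Seg.le, Seg.trimBeg] at this
    omega
  refine ⟨r, hr, rfl, by_contra fun htight => ?_⟩
  have := hseq.beg_succ_le hbad r hr (by omega)
  have := hseq.end_eq r hr (by omega)
  have := hseq.end_eq (r + 1) (by omega) hsl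
  have hsucc : SuccBad m Δ r (Δ (r + 1)).trimBeg := by
    refine ⟨hmem, Or.inl (by simp only [Seg.trimBeg]; omega), by simp only [Seg.trimBeg]; omega,
      fun ⟨t, ht, htr, hdt⟩ => ?_⟩
    have := hseq.end_eq t ht (by omega)
    have := congrArg Prod.snd hdt
    simp only [Seg.dual, Seg.trimBeg] at this
    omega
  have := (hseq.lt_and_beg_le_of_succBad hr (by omega) hsucc).2
  simp only [Seg.trimBeg] at this
  omega

end

end IsInitSeqBad

namespace IsInitSeqBad

variable {m : Multiset Seg} {Δ Δ' : ℕ → Seg} {l l' : ℕ}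

lemma succBad_congr {j : ℕ} (hj : 1 ≤ j) (hag : ∀ i, 1 ≤ i → i ≤ j → Δ i = Δ' i)
    {v : Seg} (hv : SuccBad m Δ j v) : SuccBad m Δ' j v := by
  obtain ⟨hmem, hle, hend, hcount⟩ := hv
  rw [hag j hj le_rfl] at hle hend
  refine ⟨hmem, hle, hend, fun ⟨i, hi, hij, hd⟩ => hcount ⟨i, hi, hij, ?_⟩⟩
  rw [hd, hag i hi hij]

lemma apply_eq (h : IsInitSeqBad m Δ l) (h' : IsInitSeqBad m Δ' l') :
    ∀ i, 1 ≤ i → i ≤ l → i ≤ l' → Δ i = Δ' i := by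
  suffices ∀ j, 1 ≤ j → j ≤ l → j ≤ l' → ∀ i, 1 ≤ i → i ≤ j → Δ i = Δ' i from
    fun i hi hil hil' => this i hi hil hil' i hi le_rfl
  intro j hj
  induction j, hj using Nat.le_induction with
  | base =>
    intro _ _ i hi hi1
    obtain rfl : i = 1 := by omega
    have hend : (Δ 1).2 = (Δ' 1).2 :=
      le_antisymm (h'.first_max_end _ h.first_mem) (h.first_max_end _ h'.first_mem)
    exact Seg.le_antisymm (h'.first_max _ h.first_mem hend)
      (h.first_max _ h'.first_mem hend.symm)
  | succ j hj ih =>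
    intro hjl hjl' i hi hij
    have hag := ih (by omega) (by omega)
    obtain hij | rfl := Nat.of_le_succ hij
    · exact hag i hi hij
    exact Seg.le_antisymm
      (h'.succ_max j hj (by omega) _ (succBad_congr hj hag (h.succ j hj (by omega))))
      (h.succ_max j hj (by omega) _
        (succBad_congr hj (fun i hi hij => (hag i hi hij).symm) (h'.succ j hj (by omega))))

lemma unique (h : IsInitSeqBad m Δ l) (h' : IsInitSeqBad m Δ' l') :
    l = l' ∧ ∀ j, 1 ≤ j → j ≤ l → Δ j = Δ' j := by
  have agree := h.apply_eq h'
  have hll' : l = l' := by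
    by_contra hne
    rcases Nat.lt_or_gt_of_ne hne with hlt | hlt
    · exact h.last _ (succBad_congr h.one_le
        (fun i hi hil => (agree i hi hil (by omega)).symm) (h'.succ l h.one_le hlt))
    · exact h'.last _ (succBad_congr h'.one_le
        (fun i hi hil => agree i hi (by omega) hil) (h.succ l' h'.one_le hlt))
  exact ⟨hll', fun j hj hjl => agree j hj hjl (by omega)⟩

end IsInitSeqBad

section MHash

variable {m : Multiset Seg} {Δ : ℕ → Seg} {l : ℕ}

lemma count_mHashBad (v : Seg) : (mHashBad m Δ l).count v =
    m.count v - ((seqM Δ l).count v + (seqM Δ l).count v.dual) +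
      if v.1 ≤ v.2 then
        ((seqM Δ l).map Seg.trimEnd).count v + ((seqM Δ l).map Seg.trimEnd).count v.dual
      else 0 := by
  rw [mHashBad, Multiset.count_add, Multiset.count_sub, Multiset.count_add,
    Multiset.count_filter, count_map_dual]
  congr 1
  split
  · rw [Multiset.count_add, ← count_map_dual, Multiset.map_map]
    rfl
  · rfl

lemma mem_mHashBad {v : Seg} (hv : v ∈ mHashBad m Δ l) :
    (seqM Δ l).count v + (seqM Δ l).count v.dual < m.count v ∨
      v.1 ≤ v.2 ∧ ((∃ j, 1 ≤ j ∧ j ≤ l ∧ (Δ j).trimEnd = v) ∨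
        ∃ j, 1 ≤ j ∧ j ≤ l ∧ (Δ j).trimEnd.dual = v) := by
  simp only [mHashBad, Multiset.mem_add, Multiset.mem_sub, Multiset.count_add,
    count_map_dual, Multiset.mem_filter, Multiset.mem_map, mem_seqM] at hv
  rcases hv with
    hv | ⟨⟨w, ⟨j, hj, hjl, rfl⟩, rfl⟩ | ⟨w, ⟨j, hj, hjl, rfl⟩, rfl⟩, hwf⟩
  · exact Or.inl hv
  · exact Or.inr ⟨hwf, Or.inl ⟨j, hj, hjl, rfl⟩⟩
  · exact Or.inr ⟨hwf, Or.inr ⟨j, hj, hjl, rfl⟩⟩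

variable (hseq : IsInitSeqBad m Δ l)
include hseq

lemma mem_or_eq_dual_trimEnd_of_two_le_count {v : Seg}
    (hv : 2 ≤ (mHashBad m Δ l).count v) :
    v ∈ m ∨ ∃ j, 1 ≤ j ∧ j ≤ l ∧ (Δ j).trimEnd.dual = v := by
  rw [count_mHashBad] at hv
  have hnd := Multiset.nodup_iff_count_le_one.mp (hseq.nodup_seqM.map Seg.trimEnd_injective)
  by_cases hm : v ∈ m
  · exact Or.inl hm
  · right
    rw [Multiset.count_eq_zero_of_notMem hm] at hv
    have : v.dual ∈ (seqM Δ l).map Seg.trimEnd := by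
      rw [← Multiset.count_pos]
      have := hnd v
      split at hv <;> omega
    obtain ⟨w, hw, hwv⟩ := Multiset.mem_map.mp this
    obtain ⟨j, hj, hjl, rfl⟩ := mem_seqM.mp hw
    exact ⟨j, hj, hjl, by rw [hwv, Seg.dual_dual]⟩

variable (hbad : BadInput m)
include hbad

lemma seqM_add_map_dual_le : seqM Δ l + (seqM Δ l).map Seg.dual ≤ m := by
  refine Multiset.le_iff_count.mpr fun v => ?_
  rw [Multiset.count_add, count_map_dual]
  have hnd := Multiset.nodup_iff_count_le_one.mp hseq.nodup_seqM
  have h₁ := hnd v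
  have h₂ := hnd v.dual
  by_cases hv : v ∈ seqM Δ l <;> by_cases hv' : v.dual ∈ seqM Δ l
  · obtain ⟨j, hj, hjl, rfl⟩ := mem_seqM.mp hv
    obtain ⟨i, hi, hil, hi'⟩ := mem_seqM.mp hv'
    have := hseq.two_le_count_of_dual_eq hbad hi hil hj hjl (by rw [hi', Seg.dual_dual])
    omega
  · obtain ⟨j, hj, hjl, rfl⟩ := mem_seqM.mp hv
    have := Multiset.count_pos.mpr (hseq.mem j hj hjl)
    rw [Multiset.count_eq_zero_of_notMem hv']
    omega
  · obtain ⟨j, hj, hjl, hj'⟩ := mem_seqM.mp hv'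
    have := Multiset.count_pos.mpr (hbad.dual_mem (hseq.mem j hj hjl))
    rw [hj', Seg.dual_dual] at this
    rw [Multiset.count_eq_zero_of_notMem hv]
    omega
  · simp [Multiset.count_eq_zero_of_notMem, hv, hv']

lemma end_le_of_mem_mHashBad {v : Seg} (hv : v ∈ mHashBad m Δ l) : v.2 ≤ (Δ 1).2 := by
  rcases mem_mHashBad hv with hc | ⟨-, ⟨j, hj, hjl, rfl⟩ | ⟨j, hj, hjl, rfl⟩⟩
  · exact hseq.first_max_end v (Multiset.count_pos.mp (by omega))
  · have := hseq.end_eq j hj hjl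
    simp only [Seg.trimEnd]
    omega
  · have := hseq.neg_end_le_beg hbad (hseq.mem j hj hjl)
    simp only [Seg.trimEnd, Seg.dual]
    omega

lemma emod_two_of_mem_mHashBad {v : Seg} (hv : v ∈ mHashBad m Δ l) :
    v.1 % 2 = (Δ 1).2 % 2 ∧ v.2 % 2 = (Δ 1).2 % 2 := by
  rcases mem_mHashBad hv with hc | ⟨-, ⟨j, hj, hjl, rfl⟩ | ⟨j, hj, hjl, rfl⟩⟩
  · have hm : v ∈ m := Multiset.count_pos.mp (by omega)
    exact ⟨hseq.beg_emod_two hbad hm, hbad.parity v hm _ hseq.first_mem⟩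
  all_goals
    have hm := hseq.mem j hj hjl
    have := hseq.beg_emod_two hbad hm
    have := hbad.parity _ hm _ hseq.first_mem
    simp only [Seg.trimEnd, Seg.dual]
    omega

lemma BadInput.mHashBad : BadInput (mHashBad m Δ l) where
  wf v hv := by
    have := emod_two_of_mem_mHashBad hseq hbad hv
    refine ⟨?_, by omega⟩
    rcases mem_mHashBad hv with hc | ⟨hwf, -⟩
    · exact (hbad.wf v (Multiset.count_pos.mp (by omega))).1
    · exact hwf
  symm := by
    refine Multiset.ext.mpr fun v => ?_
    rw [count_map_dual, count_mHashBad, count_mHashBad, Seg.dual_dual, hbad.count_dual]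
    have hwf : v.dual.1 ≤ v.dual.2 ↔ v.1 ≤ v.2 := by
      simp only [Seg.dual]
      omega
    simp only [hwf]
    split <;> omega
  parity v hv w hw := by
    have := (emod_two_of_mem_mHashBad hseq hbad hv).2
    have := (emod_two_of_mem_mHashBad hseq hbad hw).2
    omega
  evenCentered v hc := by
    have hdv : v.dual = v := Prod.ext (by simp [Seg.dual]; omega) (by simp [Seg.dual]; omega)
    obtain ⟨c, hcm⟩ := hbad.evenCentered v hc
    have hle := Multiset.count_le_of_le v (seqM_add_map_dual_le hseq hbad)
    rw [Multiset.count_add, count_map_dual, hdv] at hle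
    rw [count_mHashBad, hdv]
    split
    · exact ⟨c - (seqM Δ l).count v + ((seqM Δ l).map Seg.trimEnd).count v, by omega⟩
    · exact ⟨c - (seqM Δ l).count v, by omega⟩

end MHash

def BegInv (Δ Γ : ℕ → Seg) (l t : ℕ) : Prop :=
  (Γ t).1 ≤ (Δ t).1 + 2 ∧
    ((Γ t).1 = (Δ t).1 + 2 → ∃ i, 1 ≤ i ∧ i ≤ l ∧ (Δ i).dual = Δ t)

section Comparison

variable {m : Multiset Seg} {Δ : ℕ → Seg} {l : ℕ} {Γ : ℕ → Seg} {n : ℕ}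
  (hseq : IsInitSeqBad m Δ l) (hbad : BadInput m) (hseq' : IsInitSeqBad (mHashBad m Δ l) Γ n)
include hseq hbad hseq'

lemma begInv_one (hE : (Γ 1).2 = (Δ 1).2) : BegInv Δ Γ l 1 := by
  rcases mem_mHashBad hseq'.first_mem with
    hc | ⟨-, ⟨j, hj, hjl, hjv⟩ | ⟨j, hj, hjl, hjv⟩⟩
  · have hle := hseq.first_max _ (Multiset.count_pos.mp (by omega)) hE
    simp only [Seg.le] at hle
    exact ⟨by omega, fun h => absurd h (by omega)⟩
  · have := congrArg Prod.snd hjv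
    have := hseq.end_eq j hj hjl
    simp only [Seg.trimEnd] at *
    omega
  · have hv₁ : -((Δ j).2 - 2) = (Γ 1).1 := congrArg Prod.fst hjv
    have hv₂ : -(Δ j).1 = (Γ 1).2 := congrArg Prod.snd hjv
    have hle := hseq.first_max _ (hbad.dual_mem (hseq.mem j hj hjl))
      (by simp only [Seg.dual]; omega)
    simp only [Seg.le, Seg.dual] at hle
    refine ⟨by omega, fun _ => ⟨j, hj, hjl, Prod.ext ?_ ?_⟩⟩ <;>
      simp only [Seg.dual] <;> omega

lemma begInv_succ_of_tight_pair {k r : ℕ} (hk : 1 ≤ k) (hkl : k ≤ l) (hkn : k < n)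
    (hinv : ∀ t, 1 ≤ t → t ≤ k → BegInv Δ Γ l t) (hr : 1 ≤ r) (hrk : r + 1 ≤ k)
    (hd : (Δ (r + 1)).dual = Δ k) (htight : (Δ r).1 = (Δ (r + 1)).1 + 2)
    (hβ : (Γ (r + 1)).1 = (Δ (r + 1)).1 + 2) :
    k < l ∧ BegInv Δ Γ l (k + 1) := by
  have hbad' := hbad.mHashBad hseq
  have hd₁ : -(Δ (r + 1)).2 = (Δ k).1 := congrArg Prod.fst hd
  have hd₂ : -(Δ (r + 1)).1 = (Δ k).2 := congrArg Prod.snd hd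
  have := hseq.end_eq (r + 1) (by omega) (by omega)
  have := hseq.end_eq r hr (by omega)
  have := hseq.end_eq k hk hkl
  have := hseq'.beg_succ_le hbad' r hr (by omega)
  have := hseq'.beg_succ_le hbad' k hk hkn
  have hβr : (Γ r).1 = (Δ r).1 + 2 := le_antisymm (hinv r hr (by omega)).1 (by omega)
  obtain ⟨t, ht, htl, hdt⟩ := (hinv r hr (by omega)).2 hβr
  have := hseq.end_eq t ht htl
  have : -(Δ t).2 = (Δ r).1 := congrArg Prod.fst hdt
  obtain rfl : t = k + 1 := by omega
  have hdr : (Δ r).dual = Δ (k + 1) := by rw [← hdt, Seg.dual_dual]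
  have : (Δ (k + 1)).1 = -(Δ r).2 := (congrArg Prod.fst hdr).symm
  have := (hinv k hk le_rfl).1
  exact ⟨by omega, by omega, fun _ => ⟨r, hr, by omega, hdr⟩⟩

lemma exists_tight_of_dual_eq_of_le {k s : ℕ} (hs : 1 ≤ s) (hsk : s ≤ k) (hkl : k ≤ l)
    (hkn : k < n) (hE : (Γ 1).2 = (Δ 1).2) (hd : (Δ s).dual = Δ k)
    (hβ : (Γ (k + 1)).1 = (Δ k).1) (hβs : (Γ s).1 = (Δ s).1 + 2) :
    ∃ r, 1 ≤ r ∧ s = r + 1 ∧ (Δ r).1 = (Δ s).1 + 2 := by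
  have hd₁ : -(Δ s).2 = (Δ k).1 := congrArg Prod.fst hd
  have hd₂ : -(Δ s).1 = (Δ k).2 := congrArg Prod.snd hd
  have := hseq.end_eq s hs (by omega)
  have := hseq.end_eq k (by omega) hkl
  have := hseq'.end_eq (k + 1) (by omega) hkn
  have hdual : (Γ (k + 1)).dual = (Δ s).trimBeg := by
    simp only [Seg.dual, Seg.trimBeg, Prod.mk.injEq]
    omega
  by_cases hm : Γ (k + 1) ∈ m
  · exact hseq.exists_beg_eq_of_trimBeg_mem hbad hs (by omega) (hdual ▸ hbad.dual_mem hm)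
      (by omega)
  · have hΓs : (Γ (k + 1)).dual = Γ s := by
      have := hseq'.end_eq s hs (by omega)
      rw [hdual]
      exact Prod.ext (by simp only [Seg.trimBeg]; omega) (by simp only [Seg.trimBeg]; omega)
    have h2 := (hseq'.succ k (by omega) hkn).2.2.2 ⟨s, hs, hsk, hΓs⟩
    rcases mem_or_eq_dual_trimEnd_of_two_le_count hseq h2 with h | ⟨j, hj, hjl, hjv⟩
    · exact absurd h hm
    have hv₁ : -((Δ j).2 - 2) = (Γ (k + 1)).1 := congrArg Prod.fst hjv
    have hv₂ : -(Δ j).1 = (Γ (k + 1)).2 := congrArg Prod.snd hjv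
    have := hseq.end_eq j hj hjl
    exact ⟨j, hj, by omega, by omega⟩

lemma begInv_succ_of_beg_eq {k : ℕ} (hk : 1 ≤ k) (hkl : k ≤ l) (hkn : k < n)
    (hinv : ∀ t, 1 ≤ t → t ≤ k → BegInv Δ Γ l t) (hE : (Γ 1).2 = (Δ 1).2)
    (hβ : (Γ (k + 1)).1 = (Δ k).1) (hβk : (Γ k).1 = (Δ k).1 + 2) :
    k < l ∧ BegInv Δ Γ l (k + 1) := by
  obtain ⟨s, hs, hsl, hd⟩ := (hinv k hk le_rfl).2 hβk
  have hd₁ : -(Δ s).2 = (Δ k).1 := congrArg Prod.fst hd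
  have hd₂ : -(Δ s).1 = (Δ k).2 := congrArg Prod.snd hd
  have := hseq.end_eq s hs hsl
  have := hseq.end_eq k hk hkl
  rcases lt_or_ge k s with hks | hsk
  · obtain ⟨r, rfl⟩ : ∃ r, s = r + 1 := ⟨s - 1, by omega⟩
    have hdr := hseq.dual_eq_succ_of_dual_eq hbad hk (by omega) hsl hd
    have : (Δ (k + 1)).1 = -(Δ r).2 := (congrArg Prod.fst hdr).symm
    have := hseq.end_eq r (by omega) (by omega)
    exact ⟨by omega, by omega, fun _ => ⟨r, by omega, by omega, hdr⟩⟩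
  · have := hseq'.beg_le_sub (hbad.mHashBad hseq) hs hsk (by omega)
    have hβs : (Γ s).1 = (Δ s).1 + 2 := le_antisymm (hinv s hs hsk).1 (by omega)
    obtain ⟨r, hr, rfl, htight⟩ :=
      exists_tight_of_dual_eq_of_le hseq hbad hseq' hs hsk hkl hkn hE hd hβ hβs
    exact begInv_succ_of_tight_pair hseq hbad hseq' hk hkl hkn hinv hr hsk hd htight hβs

lemma begInv_succ_of_eq_dual_trimEnd {k j : ℕ} (hk : 1 ≤ k) (hkl : k ≤ l) (hkn : k < n)
    (hinv : ∀ t, 1 ≤ t → t ≤ k → BegInv Δ Γ l t) (hE : (Γ 1).2 = (Δ 1).2)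
    (hj : 1 ≤ j) (hjl : j ≤ l) (hjv : (Δ j).trimEnd.dual = Γ (k + 1)) :
    k < l ∧ BegInv Δ Γ l (k + 1) := by
  have hbad' := hbad.mHashBad hseq
  have hv₁ : -((Δ j).2 - 2) = (Γ (k + 1)).1 := congrArg Prod.fst hjv
  have hv₂ : -(Δ j).1 = (Γ (k + 1)).2 := congrArg Prod.snd hjv
  have := hseq.end_eq j hj hjl
  have := hseq.end_eq k hk hkl
  have := hseq'.end_eq (k + 1) (by omega) hkn
  have hcount : j ≤ k → 2 ≤ m.count (Δ j).dual := by
    intro hjk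
    have := hseq'.beg_le_sub hbad' hj (by omega : j ≤ k + 1) hkn
    have hβj : (Γ j).1 = (Δ j).1 + 2 := le_antisymm (hinv j hj hjk).1 (by omega)
    obtain ⟨i, hi, hil, hdi⟩ := (hinv j hj hjk).2 hβj
    rw [hbad.count_dual]
    exact hseq.two_le_count_of_dual_eq hbad hi hil hj hjl hdi
  have hsucc : SuccBad m Δ k (Δ j).dual := by
    have := hseq'.beg_succ_le hbad' k hk hkn
    have := (hinv k hk le_rfl).1
    refine ⟨hbad.dual_mem (hseq.mem j hj hjl), Or.inl (by simp only [Seg.dual]; omega),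
      by simp only [Seg.dual]; omega, fun ⟨t, ht, htk, hdt⟩ => ?_⟩
    rw [Seg.dual_dual] at hdt
    obtain rfl : t = j := hseq.eq_of_end_eq ht (by omega) hj hjl (by rw [hdt])
    exact hcount htk
  obtain ⟨hkl', hle⟩ := hseq.lt_and_beg_le_of_succBad hk hkl hsucc
  have := hseq.end_eq (k + 1) (by omega) hkl'
  simp only [Seg.dual] at hle
  refine ⟨hkl', by omega, fun _ => ⟨j, hj, hjl, Prod.ext ?_ ?_⟩⟩ <;>
    simp only [Seg.dual] <;> omega

lemma begInv_succ {k : ℕ} (hk : 1 ≤ k) (hkl : k ≤ l) (hkn : k < n)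
    (hinv : ∀ t, 1 ≤ t → t ≤ k → BegInv Δ Γ l t) (hE : (Γ 1).2 = (Δ 1).2) :
    k < l ∧ BegInv Δ Γ l (k + 1) := by
  have hinvk := (hinv k hk le_rfl).1
  have := hseq'.beg_succ_le (hbad.mHashBad hseq) k hk hkn
  have := hseq'.end_eq (k + 1) (by omega) hkn
  have := hseq.end_eq k hk hkl
  have of_beg_eq (h : (Γ (k + 1)).1 = (Δ k).1) : k < l ∧ BegInv Δ Γ l (k + 1) :=
    begInv_succ_of_beg_eq hseq hbad hseq' hk hkl hkn hinv hE h (le_antisymm hinvk (by omega))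
  rcases mem_mHashBad (hseq'.succ k hk hkn).1 with
    hc | ⟨-, ⟨j, hj, hjl, hjv⟩ | ⟨j, hj, hjl, hjv⟩⟩
  · obtain hlt | heq := lt_or_eq_of_le (show (Γ (k + 1)).1 ≤ (Δ k).1 by omega)
    · have hsucc : SuccBad m Δ k (Γ (k + 1)) := by
        refine ⟨Multiset.count_pos.mp (by omega), Or.inl hlt, by omega,
          fun ⟨t, ht, htk, hdt⟩ => ?_⟩
        have := Multiset.count_pos.mpr ((mem_seqM (l := l)).mpr ⟨t, ht, by omega, hdt.symm⟩)
        omega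
      obtain ⟨hkl', hle⟩ := hseq.lt_and_beg_le_of_succBad hk hkl hsucc
      exact ⟨hkl', by omega, fun h => absurd h (by omega)⟩
    · exact of_beg_eq heq
  · have := hseq.end_eq j hj hjl
    simp only [Seg.trimEnd, Prod.ext_iff] at hjv
    obtain rfl : j = k := by omega
    exact of_beg_eq hjv.1.symm
  · exact begInv_succ_of_eq_dual_trimEnd hseq hbad hseq' hk hkl hkn hinv hE hj hjl hjv

lemma IsInitSeqBad.length_mHashBad_le (hE : (Γ 1).2 = (Δ 1).2) : n ≤ l := by
  by_contra! hln
  have hinv : ∀ k, 1 ≤ k → k ≤ l → ∀ t, 1 ≤ t → t ≤ k → BegInv Δ Γ l t := by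
    intro k hk
    induction k, hk using Nat.le_induction with
    | base =>
      intro _ t ht ht1
      obtain rfl : t = 1 := by omega
      exact begInv_one hseq hbad hseq' hE
    | succ k hk ih =>
      intro hkl t ht htk
      obtain htk | rfl := Nat.of_le_succ htk
      · exact ih (by omega) t ht htk
      · exact (begInv_succ hseq hbad hseq' hk (by omega) (by omega) (ih (by omega)) hE).2
  have := begInv_succ hseq hbad hseq' hseq.one_le le_rfl hln (hinv l hseq.one_le le_rfl) hE
  exact lt_irrefl l this.1

end Comparison

lemma mem_mOneBad {Δ : ℕ → Seg} {l : ℕ} {v : Seg} (hv : v ∈ mOneBad Δ l) :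
    v = ((Δ l).2, (Δ 1).2) ∨ v = (-(Δ 1).2, -(Δ l).2) := by
  simpa [mOneBad] using hv

namespace IsADBad

lemma exists_isInitSeqBad {m d : Multiset Seg} (had : IsADBad m d) {v : Seg} (hv : v ∈ d) :
    ∃ Δ l, IsInitSeqBad m Δ l := by
  cases had with
  | zero => simp at hv
  | step _ hseq _ => exact ⟨_, _, hseq⟩

lemma end_le {m d : Multiset Seg} (had : IsADBad m d) (hbad : BadInput m) {Δ : ℕ → Seg}
    {l : ℕ} (hseq : IsInitSeqBad m Δ l) : ∀ v ∈ d, v.2 ≤ (Δ 1).2 := by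
  induction had generalizing Δ l with
  | zero => simp
  | @step m Δ' l' d _ hseq' hrec ih =>
    obtain ⟨rfl, hΔ⟩ := hseq'.unique hseq
    rw [← hΔ 1 le_rfl hseq'.one_le]
    intro v hv
    rcases Multiset.mem_add.mp hv with hv | hv
    · have hmem := hseq'.mem l' hseq'.one_le le_rfl
      have := hseq'.first_max_end _ hmem
      have := hseq'.neg_end_le_beg hbad hmem
      have := (hbad.wf _ hmem).1
      rcases mem_mOneBad hv with rfl | rfl <;> dsimp only <;> omega
    · obtain ⟨Γ, n, hseqΓ⟩ := hrec.exists_isInitSeqBad hv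
      exact (ih (hbad.mHashBad hseq') hseqΓ v hv).trans
        (end_le_of_mem_mHashBad hseq' hbad hseqΓ.first_mem)

lemma length_le {m d : Multiset Seg} (had : IsADBad m d) (hbad : BadInput m) {Δ : ℕ → Seg}
    {l : ℕ} (hseq : IsInitSeqBad m Δ l) :
    ∀ v ∈ d, v.2 = (Δ 1).2 → v.2 - v.1 ≤ (Δ 1).2 - (Δ l).2 := by
  induction had generalizing Δ l with
  | zero => simp
  | @step m Δ' l' d _ hseq' hrec ih =>
    obtain ⟨rfl, hΔ⟩ := hseq'.unique hseq
    rw [← hΔ 1 le_rfl hseq'.one_le, ← hΔ l' hseq'.one_le le_rfl]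
    intro v hv hvE
    rcases Multiset.mem_add.mp hv with hv | hv
    · rcases mem_mOneBad hv with rfl | rfl <;> dsimp only at hvE ⊢ <;> omega
    · obtain ⟨Γ, n, hseqΓ⟩ := hrec.exists_isInitSeqBad hv
      have hbad' := hbad.mHashBad hseq'
      have := hrec.end_le hbad' hseqΓ v hv
      have := end_le_of_mem_mHashBad hseq' hbad hseqΓ.first_mem
      have hE : (Γ 1).2 = (Δ' 1).2 := by omega
      have := ih hbad' hseqΓ v hv (by omega)
      have := hseq'.length_mHashBad_le hbad hseqΓ hE
      have := hseqΓ.end_eq n hseqΓ.one_le le_rfl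
      have := hseq'.end_eq l' hseq'.one_le le_rfl
      omega

end IsADBad

theorem stmt10_general (m : Multiset Seg) (hbad : BadInput m)
    (Δ : ℕ → Seg) (l : ℕ) (hseq : IsInitSeqBad m Δ l)
    (d : Multiset Seg) (had : IsADBad m d) :
    ∀ Δ0 ∈ d, Δ0.2 = (Δ 1).2 → Δ0.2 - Δ0.1 ≤ (Δ 1).2 - (Δ l).2 :=
  had.length_le hbad hseq

/-- Proposition 7.1.5, bad-parity case: the segment
`η₁ = [e(Δ_l), e(Δ₁)]` of `𝔪₁` is the longest among the segments of `AD(𝔪)`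
ending at `e_max = e(Δ₁)`. -/
theorem stmt10 (m : Multiset Seg) (hbad : BadInput m) (hne : m ≠ 0)
    (Δ : ℕ → Seg) (l : ℕ) (hseq : IsInitSeqBad m Δ l)
    (d : Multiset Seg) (had : IsADBad m d) :
    ∀ Δ0 ∈ d, Δ0.2 = (Δ 1).2 → Δ0.2 - Δ0.1 ≤ (Δ 1).2 - (Δ l).2 :=
  stmt10_general m hbad Δ l hseq d had

end AZ
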